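/- A pair (λ, x) ∈ ℝ × ℝ^{n+m} is a solution of the eigenvalue system (EV) if and only if it is a solution of the simplified system (SS). -/
import Mathlib


open Finset

/-- The eigenvalue system (EV) for the 2D-traffic dynamics: `lam` is the
additive eigenvalue and `x : ℕ → ℝ` carries the coordinates `x 1, …, x (n+m)`. -/
def EVsol (n m : ℕ) (a : ℕ → ℝ) (lam : ℝ) (x : ℕ → ℝ) : Prop :=
  (∀ i : ℕ, ((2 ≤ i ∧ i ≤ n - 1) ∨ (n + 2 ≤ i ∧ i ≤ n + m - 1)) →
      lam + x i = min (a (i - 1) + x (i - 1)) ((1 - a i) + x (i + 1))) ∧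
  lam + x n = min ((1 - (a n + a (n + m))) + x 1 + x (n + 1) - lam - x (n + m))
      (a (n - 1) + x (n - 1)) ∧
  lam + x (n + m) = min ((1 - (a n + a (n + m))) + x 1 + x (n + 1) - x n)
      (a (n + m - 1) + x (n + m - 1)) ∧
  lam + x 1 = min (a n + (x n + x (n + m)) / 2) ((1 - a 1) + x 2) ∧
  lam + x (n + 1) = min (a (n + m) + (x n + x (n + m)) / 2) ((1 - a (n + 1)) + x (n + 2))

/-- The simplified system (SS). -/
def SSsol (n m : ℕ) (a : ℕ → ℝ) (lam : ℝ) (x : ℕ → ℝ) : Prop :=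
  (∀ i : ℕ, ((2 ≤ i ∧ i ≤ n - 1) ∨ (n + 2 ≤ i ∧ i ≤ n + m - 1)) →
      x i = min (a (i - 1) - lam + x (i - 1)) ((1 - a i) - lam + x (i + 1))) ∧
  x n = min ((1 - (a n + a (n + m))) - 2 * lam + x 1 + x (n + 1) - x (n + m))
      ((∑ i ∈ Finset.Icc 1 (n - 1), a i) - ((n : ℝ) - 1) * lam + x 1) ∧
  x (n + m) = min ((1 - (a n + a (n + m))) - lam + x 1 + x (n + 1) - x n)
      ((∑ i ∈ Finset.Icc (n + 1) (n + m - 1), a i) - ((m : ℝ) - 1) * lam + x (n + 1)) ∧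
  x 1 = min (a n - lam + (x n + x (n + m)) / 2)
      ((∑ i ∈ Finset.Icc 1 (n - 1), (1 - a i)) - ((n : ℝ) - 1) * lam + x n) ∧
  x (n + 1) = min (a (n + m) - lam + (x n + x (n + m)) / 2)
      ((∑ i ∈ Finset.Icc (n + 1) (n + m - 1), (1 - a i)) - ((m : ℝ) - 1) * lam + x (n + m))

/- ### Auxiliary lemmas -/

lemma sumSplitTop (f : ℕ → ℝ) {p j : ℕ} (hj : 1 ≤ j) (h : p ≤ j) :
    (∑ t ∈ Finset.Icc p j, f t) = (∑ t ∈ Finset.Icc p (j - 1), f t) + f j := by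
  obtain ⟨k, rfl⟩ : ∃ k, j = k + 1 := ⟨j - 1, by omega⟩
  simp only [Nat.add_sub_cancel]
  exact Finset.sum_Icc_succ_top (by omega) f

lemma sumSplitBot (f : ℕ → ℝ) {j k : ℕ} (h : j ≤ k) :
    (∑ t ∈ Finset.Icc j k, f t) = f j + ∑ t ∈ Finset.Icc (j + 1) k, f t := by
  rw [show Finset.Icc j k = insert j (Finset.Icc (j+1) k) from by
    rw [Finset.Icc_add_one_left_eq_Ioc]; exact (Finset.Ioc_insert_left h).symm,
    Finset.sum_insert (by simp only [Finset.mem_Icc]; omega)]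

/-- Monotone chain bound, upward. -/
lemma mono_up (a x : ℕ → ℝ) (lam : ℝ) {p q : ℕ} (hp : 1 ≤ p) (hpq : p + 1 ≤ q)
    (hch : ∀ i, p + 1 ≤ i → i + 1 ≤ q →
      x i = min (a (i - 1) - lam + x (i - 1)) ((1 - a i) - lam + x (i + 1))) :
    a (q - 1) - lam + x (q - 1) ≤
      (∑ t ∈ Finset.Icc p (q - 1), a t) - ((q - p : ℕ) : ℝ) * lam + x p := by
  have U : ∀ d j, p + d = j → j + 1 ≤ q →
      x j ≤ (∑ t ∈ Finset.Icc p (j - 1), a t) - ((j - p : ℕ) : ℝ) * lam + x p := by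
    intro d
    induction d with
    | zero =>
      intro j hj hq
      have hjp : j = p := by omega
      subst hjp
      rw [Finset.Icc_eq_empty (by omega)]
      simp [Nat.sub_self]
    | succ d ih =>
      intro j hj hq
      have h1 : x j ≤ a (j - 1) - lam + x (j - 1) := by
        rw [hch j (by omega) hq]; exact min_le_left _ _
      have h2 := ih (j - 1) (by omega) (by omega)
      have h3 : (∑ t ∈ Finset.Icc p (j - 1), a t)
          = (∑ t ∈ Finset.Icc p (j - 1 - 1), a t) + a (j - 1) :=
        sumSplitTop a (by omega) (by omega)
      have h4 : ((j - p : ℕ) : ℝ) = ((j - 1 - p : ℕ) : ℝ) + 1 := by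
        rw [show j - p = (j - 1 - p) + 1 from by omega]; push_cast; ring
      rw [h3, h4]; linarith
  have h5 := U (q - 1 - p) (q - 1) (by omega) (by omega)
  have h3 : (∑ t ∈ Finset.Icc p (q - 1), a t)
      = (∑ t ∈ Finset.Icc p (q - 1 - 1), a t) + a (q - 1) :=
    sumSplitTop a (by omega) (by omega)
  have h4 : ((q - p : ℕ) : ℝ) = ((q - 1 - p : ℕ) : ℝ) + 1 := by
    rw [show q - p = (q - 1 - p) + 1 from by omega]; push_cast; ring
  rw [h3, h4]; linarith

/-- Monotone chain bound, downward. -/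
lemma mono_down (a x : ℕ → ℝ) (lam : ℝ) {p q : ℕ} (hp : 1 ≤ p) (hpq : p + 1 ≤ q)
    (hch : ∀ i, p + 1 ≤ i → i + 1 ≤ q →
      x i = min (a (i - 1) - lam + x (i - 1)) ((1 - a i) - lam + x (i + 1))) :
    (1 - a p) - lam + x (p + 1) ≤
      (∑ t ∈ Finset.Icc p (q - 1), (1 - a t)) - ((q - p : ℕ) : ℝ) * lam + x q := by
  have V : ∀ d j, j + d = q → p + 1 ≤ j →
      x j ≤ (∑ t ∈ Finset.Icc j (q - 1), (1 - a t)) - ((q - j : ℕ) : ℝ) * lam + x q := by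
    intro d
    induction d with
    | zero =>
      intro j hj hq
      have hjq : j = q := by omega
      subst hjq
      rw [Finset.Icc_eq_empty (by omega)]
      simp [Nat.sub_self]
    | succ d ih =>
      intro j hj hq
      have h1 : x j ≤ (1 - a j) - lam + x (j + 1) := by
        rw [hch j hq (by omega)]; exact min_le_right _ _
      have h2 := ih (j + 1) (by omega) (by omega)
      have h3 : (∑ t ∈ Finset.Icc j (q - 1), (1 - a t))
          = (1 - a j) + ∑ t ∈ Finset.Icc (j + 1) (q - 1), (1 - a t) :=
        sumSplitBot _ (by omega)
      have h4 : ((q - j : ℕ) : ℝ) = ((q - (j + 1) : ℕ) : ℝ) + 1 := by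
        rw [show q - j = (q - (j + 1)) + 1 from by omega]; push_cast; ring
      rw [h3, h4]; linarith
  have h5 := V (q - (p + 1)) (p + 1) (by omega) (by omega)
  have h3 : (∑ t ∈ Finset.Icc p (q - 1), (1 - a t))
      = (1 - a p) + ∑ t ∈ Finset.Icc (p + 1) (q - 1), (1 - a t) :=
    sumSplitBot _ (by omega)
  have h4 : ((q - p : ℕ) : ℝ) = ((q - (p + 1) : ℕ) : ℝ) + 1 := by
    rw [show q - p = (q - (p + 1)) + 1 from by omega]; push_cast; ring
  rw [h3, h4]; linarith

/-- Chain collapse, upward: if the top link is ≥ its first branch, the whole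
chain telescopes. -/
lemma chain_up (a x : ℕ → ℝ) (lam : ℝ) {p q : ℕ} (hlam : lam < 1/2)
    (hp : 1 ≤ p) (hpq : p + 1 ≤ q)
    (hch : ∀ i, p + 1 ≤ i → i + 1 ≤ q →
      x i = min (a (i - 1) - lam + x (i - 1)) ((1 - a i) - lam + x (i + 1)))
    (htop : a (q - 1) - lam + x (q - 1) ≤ x q) :
    a (q - 1) - lam + x (q - 1) =
      (∑ t ∈ Finset.Icc p (q - 1), a t) - ((q - p : ℕ) : ℝ) * lam + x p := by
  have key : ∀ d i, i + d = q → p + 1 ≤ i → a (i - 1) - lam + x (i - 1) ≤ x i := by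
    intro d
    induction d with
    | zero =>
      intro i hiq hp1
      have : i = q := by omega
      subst this; exact htop
    | succ d ih =>
      intro i hiq hp1
      have hnext : a (i + 1 - 1) - lam + x (i + 1 - 1) ≤ x (i + 1) :=
        ih (i + 1) (by omega) (by omega)
      simp only [Nat.add_sub_cancel] at hnext
      have hchi := hch i hp1 (by omega)
      rcases le_total (a (i - 1) - lam + x (i - 1)) ((1 - a i) - lam + x (i + 1)) with hle | hle
      · rw [min_eq_left hle] at hchi; linarith
      · rw [min_eq_right hle] at hchi; linarith
  have heq : ∀ i, p + 1 ≤ i → i + 1 ≤ q → x i = a (i - 1) - lam + x (i - 1) := by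
    intro i h1 h2
    have hk : a (i + 1 - 1) - lam + x (i + 1 - 1) ≤ x (i + 1) :=
      key (q - (i + 1)) (i + 1) (by omega) (by omega)
    simp only [Nat.add_sub_cancel] at hk
    have hchi := hch i h1 h2
    rcases le_total (a (i - 1) - lam + x (i - 1)) ((1 - a i) - lam + x (i + 1)) with hle | hle
    · rw [min_eq_left hle] at hchi; exact hchi
    · rw [min_eq_right hle] at hchi; linarith
  have tel : ∀ d j, p + d = j → j + 1 ≤ q →
      x j = (∑ t ∈ Finset.Icc p (j - 1), a t) - ((j - p : ℕ) : ℝ) * lam + x p := by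
    intro d
    induction d with
    | zero =>
      intro j hj hq
      have hjp : j = p := by omega
      subst hjp
      rw [Finset.Icc_eq_empty (by omega)]
      simp [Nat.sub_self]
    | succ d ih =>
      intro j hj hq
      have h1 : x j = a (j - 1) - lam + x (j - 1) := heq j (by omega) hq
      have h2 := ih (j - 1) (by omega) (by omega)
      have h3 : (∑ t ∈ Finset.Icc p (j - 1), a t)
          = (∑ t ∈ Finset.Icc p (j - 1 - 1), a t) + a (j - 1) :=
        sumSplitTop a (by omega) (by omega)
      have h4 : ((j - p : ℕ) : ℝ) = ((j - 1 - p : ℕ) : ℝ) + 1 := by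
        rw [show j - p = (j - 1 - p) + 1 from by omega]; push_cast; ring
      rw [h3, h4, h1, h2]; ring
  have h5 := tel (q - 1 - p) (q - 1) (by omega) (by omega)
  have h3 : (∑ t ∈ Finset.Icc p (q - 1), a t)
      = (∑ t ∈ Finset.Icc p (q - 1 - 1), a t) + a (q - 1) :=
    sumSplitTop a (by omega) (by omega)
  have h4 : ((q - p : ℕ) : ℝ) = ((q - 1 - p : ℕ) : ℝ) + 1 := by
    rw [show q - p = (q - 1 - p) + 1 from by omega]; push_cast; ring
  rw [h3, h4, h5]; ring

/-- Chain collapse, downward. -/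
lemma chain_down (a x : ℕ → ℝ) (lam : ℝ) {p q : ℕ} (hlam : lam < 1/2)
    (hp : 1 ≤ p) (hpq : p + 1 ≤ q)
    (hch : ∀ i, p + 1 ≤ i → i + 1 ≤ q →
      x i = min (a (i - 1) - lam + x (i - 1)) ((1 - a i) - lam + x (i + 1)))
    (hbot : (1 - a p) - lam + x (p + 1) ≤ x p) :
    (1 - a p) - lam + x (p + 1) =
      (∑ t ∈ Finset.Icc p (q - 1), (1 - a t)) - ((q - p : ℕ) : ℝ) * lam + x q := by
  have key : ∀ d i, p + d = i → i + 1 ≤ q → (1 - a i) - lam + x (i + 1) ≤ x i := by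
    intro d
    induction d with
    | zero =>
      intro i hip hq
      have : i = p := by omega
      subst this; exact hbot
    | succ d ih =>
      intro i hip hq
      have hprev : (1 - a (i - 1)) - lam + x (i - 1 + 1) ≤ x (i - 1) :=
        ih (i - 1) (by omega) (by omega)
      simp only [show i - 1 + 1 = i from by omega] at hprev
      have hchi := hch i (by omega) hq
      rcases le_total (a (i - 1) - lam + x (i - 1)) ((1 - a i) - lam + x (i + 1)) with hle | hle
      · rw [min_eq_left hle] at hchi; linarith
      · rw [min_eq_right hle] at hchi; linarith
  have heq : ∀ i, p + 1 ≤ i → i + 1 ≤ q → x i = (1 - a i) - lam + x (i + 1) := by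
    intro i h1 h2
    have hk := key (i - p) i (by omega) h2
    have hchi := hch i h1 h2
    rcases le_total (a (i - 1) - lam + x (i - 1)) ((1 - a i) - lam + x (i + 1)) with hle | hle
    · rw [min_eq_left hle] at hchi; linarith
    · rw [min_eq_right hle] at hchi; exact hchi
  have tel : ∀ d j, j + d = q → p + 1 ≤ j →
      x j = (∑ t ∈ Finset.Icc j (q - 1), (1 - a t)) - ((q - j : ℕ) : ℝ) * lam + x q := by
    intro d
    induction d with
    | zero =>
      intro j hj hq
      have hjq : j = q := by omega
      subst hjq
      rw [Finset.Icc_eq_empty (by omega)]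
      simp [Nat.sub_self]
    | succ d ih =>
      intro j hj hq
      have h1 : x j = (1 - a j) - lam + x (j + 1) := heq j hq (by omega)
      have h2 := ih (j + 1) (by omega) (by omega)
      have h3 : (∑ t ∈ Finset.Icc j (q - 1), (1 - a t))
          = (1 - a j) + ∑ t ∈ Finset.Icc (j + 1) (q - 1), (1 - a t) :=
        sumSplitBot _ (by omega)
      have h4 : ((q - j : ℕ) : ℝ) = ((q - (j + 1) : ℕ) : ℝ) + 1 := by
        rw [show q - j = (q - (j + 1)) + 1 from by omega]; push_cast; ring
      rw [h3, h4, h1, h2]; ring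
  have h5 := tel (q - (p + 1)) (p + 1) (by omega) (by omega)
  have h3 : (∑ t ∈ Finset.Icc p (q - 1), (1 - a t))
      = (1 - a p) + ∑ t ∈ Finset.Icc (p + 1) (q - 1), (1 - a t) :=
    sumSplitBot _ (by omega)
  have h4 : ((q - p : ℕ) : ℝ) = ((q - (p + 1) : ℕ) : ℝ) + 1 := by
    rw [show q - p = (q - (p + 1)) + 1 from by omega]; push_cast; ring
  rw [h3, h4, h5]; ring

lemma eq_min_shift {P Q c xi P' Q' : ℝ} (h : c + xi = min P Q)
    (hP : P' = P - c) (hQ : Q' = Q - c) : xi = min P' Q' := by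
  rcases le_total P Q with hle | hle
  · rw [min_eq_left hle] at h; rw [min_eq_left (by linarith)]; linarith
  · rw [min_eq_right hle] at h; rw [min_eq_right (by linarith)]; linarith

lemma min_shift_eq {P Q c xi P' Q' : ℝ} (h : xi = min P' Q')
    (hP : P' = P - c) (hQ : Q' = Q - c) : c + xi = min P Q := by
  rcases le_total P Q with hle | hle
  · rw [min_eq_left (by linarith : P' ≤ Q')] at h; rw [min_eq_left hle]; linarith
  · rw [min_eq_right (by linarith : Q' ≤ P')] at h; rw [min_eq_right hle]; linarith

lemma min_swap {T A B X : ℝ} (hAB : A ≤ B) (hcoll : A ≤ X → A = B) :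
    X = min T A ↔ X = min T B := by
  constructor
  · intro h
    rcases le_or_gt A X with hc | hc
    · rw [← hcoll hc]; exact h
    · have hXT : X = T := by
        rcases le_total T A with ht | ht
        · rwa [min_eq_left ht] at h
        · rw [min_eq_right ht] at h; linarith
      rw [min_eq_left (by linarith : T ≤ B)]
      exact hXT
  · intro h
    rcases le_or_gt A X with hc | hc
    · rw [hcoll hc]; exact h
    · have hXT : X = T := by
        rcases le_total T B with ht | ht
        · rwa [min_eq_left ht] at h
        · rw [min_eq_right ht] at h; linarith
      rw [min_eq_left (by linarith : T ≤ A)]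
      exact hXT

theorem stmt2 (n m : ℕ) (hn : 2 ≤ n) (hm : 2 ≤ m) (a : ℕ → ℝ)
    (ha : ∀ i : ℕ, 1 ≤ i → i ≤ n + m → 0 ≤ a i ∧ a i ≤ 1)
    (hprio : a n + a (n + m) ≤ 1)
    (lam : ℝ) (x : ℕ → ℝ) :
    EVsol n m a lam x ↔ SSsol n m a lam x := by
  have hcastn : ((n - 1 : ℕ) : ℝ) = (n : ℝ) - 1 := by
    rw [Nat.cast_sub (by omega)]; norm_num
  have hcastm : ((n + m - (n + 1) : ℕ) : ℝ) = (m : ℝ) - 1 := by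
    rw [show n + m - (n + 1) = m - 1 from by omega, Nat.cast_sub (by omega)]; norm_num
  constructor
  · rintro ⟨hch, h2, h3, h4, h5⟩
    have f1 := h2.le.trans (min_le_left _ _)
    have f2 := h3.le.trans (min_le_left _ _)
    have f3 := h4.le.trans (min_le_left _ _)
    have f4 := h5.le.trans (min_le_left _ _)
    have hlam : lam < 1/2 := by linarith
    have hc : ∀ i, ((2 ≤ i ∧ i ≤ n - 1) ∨ (n + 2 ≤ i ∧ i ≤ n + m - 1)) →
        x i = min (a (i - 1) - lam + x (i - 1)) ((1 - a i) - lam + x (i + 1)) :=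
      fun i hi => eq_min_shift (hch i hi) (by ring) (by ring)
    have hch1 : ∀ i, 1 + 1 ≤ i → i + 1 ≤ n →
        x i = min (a (i - 1) - lam + x (i - 1)) ((1 - a i) - lam + x (i + 1)) :=
      fun i hi1 hi2 => hc i (Or.inl ⟨by omega, by omega⟩)
    have hch2 : ∀ i, (n + 1) + 1 ≤ i → i + 1 ≤ n + m →
        x i = min (a (i - 1) - lam + x (i - 1)) ((1 - a i) - lam + x (i + 1)) :=
      fun i hi1 hi2 => hc i (Or.inr ⟨by omega, by omega⟩)
    refine ⟨hc, ?_, ?_, ?_, ?_⟩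
    · have hx : x n = min ((1 - (a n + a (n + m))) - 2 * lam + x 1 + x (n + 1) - x (n + m))
          (a (n - 1) - lam + x (n - 1)) := eq_min_shift h2 (by ring) (by ring)
      have hAB := mono_up a x lam (le_refl 1) (by omega) hch1
      rw [hcastn] at hAB
      have hcoll : a (n - 1) - lam + x (n - 1) ≤ x n →
          a (n - 1) - lam + x (n - 1)
            = (∑ i ∈ Finset.Icc 1 (n - 1), a i) - ((n : ℝ) - 1) * lam + x 1 := by
        intro h
        have := chain_up a x lam hlam (le_refl 1) (by omega) hch1 h
        rwa [hcastn] at this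
      exact (min_swap hAB hcoll).mp hx
    · have hx : x (n + m) = min ((1 - (a n + a (n + m))) - lam + x 1 + x (n + 1) - x n)
          (a (n + m - 1) - lam + x (n + m - 1)) := eq_min_shift h3 (by ring) (by ring)
      have hAB := mono_up a x lam (p := n + 1) (q := n + m) (by omega) (by omega) hch2
      rw [hcastm] at hAB
      have hcoll : a (n + m - 1) - lam + x (n + m - 1) ≤ x (n + m) →
          a (n + m - 1) - lam + x (n + m - 1)
            = (∑ i ∈ Finset.Icc (n + 1) (n + m - 1), a i) - ((m : ℝ) - 1) * lam + x (n + 1) := by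
        intro h
        have := chain_up a x lam (p := n + 1) (q := n + m) hlam (by omega) (by omega) hch2 h
        rwa [hcastm] at this
      exact (min_swap hAB hcoll).mp hx
    · have hx : x 1 = min (a n - lam + (x n + x (n + m)) / 2)
          ((1 - a 1) - lam + x 2) := eq_min_shift h4 (by ring) (by ring)
      have hAB := mono_down a x lam (le_refl 1) (by omega : 1 + 1 ≤ n) hch1
      rw [hcastn] at hAB
      have hcoll : (1 - a 1) - lam + x 2 ≤ x 1 →
          (1 - a 1) - lam + x 2
            = (∑ i ∈ Finset.Icc 1 (n - 1), (1 - a i)) - ((n : ℝ) - 1) * lam + x n := by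
        intro h
        have := chain_down a x lam hlam (le_refl 1) (by omega : 1 + 1 ≤ n) hch1 h
        rwa [hcastn] at this
      exact (min_swap hAB hcoll).mp hx
    · have hx : x (n + 1) = min (a (n + m) - lam + (x n + x (n + m)) / 2)
          ((1 - a (n + 1)) - lam + x (n + 2)) := eq_min_shift h5 (by ring) (by ring)
      have hAB := mono_down a x lam (p := n + 1) (q := n + m) (by omega) (by omega) hch2
      rw [hcastm] at hAB
      have hcoll : (1 - a (n + 1)) - lam + x (n + 2) ≤ x (n + 1) →
          (1 - a (n + 1)) - lam + x (n + 2)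
            = (∑ i ∈ Finset.Icc (n + 1) (n + m - 1), (1 - a i)) - ((m : ℝ) - 1) * lam + x (n + m) := by
        intro h
        have := chain_down a x lam (p := n + 1) (q := n + m) hlam (by omega) (by omega) hch2 h
        rwa [hcastm] at this
      exact (min_swap hAB hcoll).mp hx
  · rintro ⟨hc, h2, h3, h4, h5⟩
    have f1 := h2.le.trans (min_le_left _ _)
    have f2 := h3.le.trans (min_le_left _ _)
    have f3 := h4.le.trans (min_le_left _ _)
    have f4 := h5.le.trans (min_le_left _ _)
    have hlam : lam < 1/2 := by linarith
    have hch1 : ∀ i, 1 + 1 ≤ i → i + 1 ≤ n →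
        x i = min (a (i - 1) - lam + x (i - 1)) ((1 - a i) - lam + x (i + 1)) :=
      fun i hi1 hi2 => hc i (Or.inl ⟨by omega, by omega⟩)
    have hch2 : ∀ i, (n + 1) + 1 ≤ i → i + 1 ≤ n + m →
        x i = min (a (i - 1) - lam + x (i - 1)) ((1 - a i) - lam + x (i + 1)) :=
      fun i hi1 hi2 => hc i (Or.inr ⟨by omega, by omega⟩)
    refine ⟨fun i hi => min_shift_eq (hc i hi) (by ring) (by ring), ?_, ?_, ?_, ?_⟩
    · have hAB := mono_up a x lam (le_refl 1) (by omega : 1 + 1 ≤ n) hch1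
      rw [hcastn] at hAB
      have hcoll : a (n - 1) - lam + x (n - 1) ≤ x n →
          a (n - 1) - lam + x (n - 1)
            = (∑ i ∈ Finset.Icc 1 (n - 1), a i) - ((n : ℝ) - 1) * lam + x 1 := by
        intro h
        have := chain_up a x lam hlam (le_refl 1) (by omega : 1 + 1 ≤ n) hch1 h
        rwa [hcastn] at this
      have hxA := (min_swap hAB hcoll).mpr h2
      exact min_shift_eq hxA (by ring) (by ring)
    · have hAB := mono_up a x lam (p := n + 1) (q := n + m) (by omega) (by omega) hch2
      rw [hcastm] at hAB
      have hcoll : a (n + m - 1) - lam + x (n + m - 1) ≤ x (n + m) →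
          a (n + m - 1) - lam + x (n + m - 1)
            = (∑ i ∈ Finset.Icc (n + 1) (n + m - 1), a i) - ((m : ℝ) - 1) * lam + x (n + 1) := by
        intro h
        have := chain_up a x lam (p := n + 1) (q := n + m) hlam (by omega) (by omega) hch2 h
        rwa [hcastm] at this
      have hxA := (min_swap hAB hcoll).mpr h3
      exact min_shift_eq hxA (by ring) (by ring)
    · have hAB := mono_down a x lam (le_refl 1) (by omega : 1 + 1 ≤ n) hch1
      rw [hcastn] at hAB
      have hcoll : (1 - a 1) - lam + x 2 ≤ x 1 →
          (1 - a 1) - lam + x 2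
            = (∑ i ∈ Finset.Icc 1 (n - 1), (1 - a i)) - ((n : ℝ) - 1) * lam + x n := by
        intro h
        have := chain_down a x lam hlam (le_refl 1) (by omega : 1 + 1 ≤ n) hch1 h
        rwa [hcastn] at this
      have hxA := (min_swap hAB hcoll).mpr h4
      exact min_shift_eq hxA (by ring) (by ring)
    · have hAB := mono_down a x lam (p := n + 1) (q := n + m) (by omega) (by omega) hch2
      rw [hcastm] at hAB
      have hcoll : (1 - a (n + 1)) - lam + x (n + 2) ≤ x (n + 1) →
          (1 - a (n + 1)) - lam + x (n + 2)
            = (∑ i ∈ Finset.Icc (n + 1) (n + m - 1), (1 - a i)) - ((m : ℝ) - 1) * lam + x (n + m) := by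
        intro h
        have := chain_down a x lam (p := n + 1) (q := n + m) hlam (by omega) (by omega) hch2 h
        rwa [hcastm] at this
      have hxA := (min_swap hAB hcoll).mpr h5
      exact min_shift_eq hxA (by ring) (by ring)
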